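/- Consider the error dynamics ṡ = −η s + f̃ with η > 0 under the monotonicity assumption (with function α(x, t) and constant D₁ > 0), together with the doubly elastic momentum algorithm v̂̇ = −γ f̃ α + ρ(v̄ − v̂), v̄̇ = ρ(v̂ − v̄), â̇ = β 𝒩(v̂ − â) + k β 𝒩(ā − â), ā̇ = k β 𝒩(â − ā), with 0 < ρ < β(1 − k), 1/3 ≤ k < 1, 𝒩(t) = 1 + μ‖α(x(t), t)‖², γ, β > 0, and μ > 2 γ D₁/(β(1 − k)). Then all trajectories (x, v̂, v̄, â, ā) remain bounded, f̃ ∈ L² ∩ L∞, s ∈ L² ∩ L∞, (v̂ − v̄) ∈ L², (â − ā) ∈ L², (v̂ − â) ∈ L², s(t) → 0 as t → ∞, and x(t) → x_d(t). -/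

import Mathlib

open MeasureTheory Filter
open scoped RealInnerProductSpace ENNReal

noncomputable section

/-- The signal `g` is square-integrable (`L²`) on `[0, ∞)`. -/
def InL2 {F : Type*} [NormedAddCommGroup F] (g : ℝ → F) : Prop :=
  ∫⁻ t in Set.Ici (0 : ℝ), ENNReal.ofReal (‖g t‖ ^ 2) < ⊤

/-- The signal `g` is bounded (`L∞`) on `[0, ∞)`. -/
def InLinf {F : Type*} [NormedAddCommGroup F] (g : ℝ → F) : Prop :=
  ∃ C : ℝ, ∀ t : ℝ, 0 ≤ t → ‖g t‖ ≤ C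

/-!
Along the adaptation law, the function
`V = (A/2) s² + ½‖v̂ - a‖² + ½‖v̄ - a‖² + ⅓‖â - v̂‖² + (k/3)‖â - ā‖²`, `A = γη/(50 D₁)`,
satisfies `V̇ ≤ -c (s² + f̃² + ‖v̂ - v̄‖² + ‖â - ā‖² + ‖v̂ - â‖²)`: the monotonicity assumption
turns `-γ f̃ ⟪â - a, α⟫` into `-(γ/D₁) f̃²`, and the normalisation `𝒩 = 1 + μ‖α‖²` absorbs the
cross term `f̃ ⟪â - v̂, α⟫` thanks to `μ > 2γD₁/(β(1 - k))`. So `V` is nonincreasing, which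
bounds every state, and `V̇` is integrable on `(0, ∞)`, which puts every dissipated signal in `L²`.
Finally `s` and `ṡ = -ηs + f̃` are in `L²`, so `(s²)' = 2 s ṡ` is integrable and `s²` has a limit,
necessarily `0`.
-/

section Signals

open Set

theorem antitoneOn_Ici_of_hasDerivAt_nonpos {V V' : ℝ → ℝ} {a : ℝ}
    (hderiv : ∀ t ∈ Ici a, HasDerivAt V (V' t) t) (hV' : ∀ t ∈ Ioi a, V' t ≤ 0) :
    AntitoneOn V (Ici a) := by
  refine antitoneOn_of_hasDerivWithinAt_nonpos (f' := V') (convex_Ici a)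
    (fun t ht => (hderiv t ht).continuousAt.continuousWithinAt) (fun t ht => ?_) ?_
  all_goals rw [interior_Ici] at *
  · exact (hderiv t (mem_Ici_of_Ioi ht)).hasDerivWithinAt
  · exact hV'

theorem integrableOn_Ioi_deriv_of_nonpos_of_nonneg {V V' : ℝ → ℝ} {a : ℝ}
    (hderiv : ∀ t ∈ Ici a, HasDerivAt V (V' t) t) (hV' : ∀ t ∈ Ioi a, V' t ≤ 0)
    (hV : ∀ t ∈ Ici a, 0 ≤ V t) : IntegrableOn V' (Ioi a) := by
  have hanti := antitoneOn_Ici_of_hasDerivAt_nonpos hderiv hV'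
  have hmax : Antitone fun t => V (max a t) := fun t u htu =>
    hanti (le_max_left a t) (le_max_left a u) (max_le_max le_rfl htu)
  have hlim := tendsto_atTop_ciInf hmax ⟨0, by
    rintro _ ⟨t, rfl⟩
    exact hV _ (le_max_left a t)⟩
  refine integrableOn_Ioi_deriv_of_nonpos' hderiv hV' (hlim.congr' ?_)
  filter_upwards [eventually_ge_atTop a] with t ht
  rw [max_eq_right ht]

theorem inL2_of_sq_le {F : Type*} [NormedAddCommGroup F] {g : ℝ → F} {w : ℝ → ℝ}
    (hw : IntegrableOn w (Ioi 0)) (hg : ∀ t ∈ Ioi 0, ‖g t‖ ^ 2 ≤ w t) : InL2 g := by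
  unfold InL2
  rw [← setLIntegral_congr Ioi_ae_eq_Ici]
  calc ∫⁻ t in Ioi 0, ENNReal.ofReal (‖g t‖ ^ 2)
      ≤ ∫⁻ t in Ioi 0, ENNReal.ofReal (w t) :=
        setLIntegral_mono' measurableSet_Ioi fun t ht => ENNReal.ofReal_le_ofReal (hg t ht)
    _ < ⊤ := hw.lintegral_lt_top

theorem tendsto_zero_of_sq_le_of_deriv_sq_le {s s' w₁ w₂ : ℝ → ℝ} {a : ℝ}
    (hderiv : ∀ t ∈ Ioi a, HasDerivAt s (s' t) t)
    (hw₁ : IntegrableOn w₁ (Ioi a)) (hw₂ : IntegrableOn w₂ (Ioi a))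
    (hs : ∀ t ∈ Ioi a, s t ^ 2 ≤ w₁ t) (hs' : ∀ t ∈ Ioi a, s' t ^ 2 ≤ w₂ t) :
    Tendsto s atTop (nhds 0) := by
  have hsq : ∀ t ∈ Ioi a, HasDerivAt (fun u => s u ^ 2) (2 * s t * s' t) t := fun t ht => by
    simpa using (hderiv t ht).fun_pow 2
  have hcont : ContinuousOn (fun u => s u ^ 2) (Ioi a) := fun t ht =>
    (hsq t ht).continuousAt.continuousWithinAt
  have hint : IntegrableOn (fun u => s u ^ 2) (Ioi a) := by
    refine hw₁.mono' (hcont.aestronglyMeasurable measurableSet_Ioi) ?_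
    filter_upwards [self_mem_ae_restrict measurableSet_Ioi] with t ht
    rw [Real.norm_of_nonneg (sq_nonneg _)]
    exact hs t ht
  have hint' : IntegrableOn (deriv fun u => s u ^ 2) (Ioi a) := by
    refine (hw₁.add hw₂).mono' (measurable_deriv _).aestronglyMeasurable ?_
    filter_upwards [self_mem_ae_restrict measurableSet_Ioi] with t ht
    rw [(hsq t ht).deriv, Real.norm_eq_abs, Pi.add_apply, abs_le]
    constructor <;> nlinarith [hs t ht, hs' t ht, sq_nonneg (s t + s' t), sq_nonneg (s t - s' t)]
  have hsq0 := tendsto_zero_of_hasDerivAt_of_integrableOn_Ioi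
    (fun t ht => (hsq t ht).differentiableAt.hasDerivAt) hint' hint
  rw [tendsto_zero_iff_abs_tendsto_zero]
  simpa [Function.comp_def, Real.sqrt_sq_eq_abs] using hsq0.sqrt

theorem InLinf.add {F : Type*} [NormedAddCommGroup F] {f g : ℝ → F} (hf : InLinf f)
    (hg : InLinf g) : InLinf fun t => f t + g t := by
  obtain ⟨C, hC⟩ := hf
  obtain ⟨D, hD⟩ := hg
  exact ⟨C + D, fun t ht => (norm_add_le _ _).trans (add_le_add (hC t ht) (hD t ht))⟩

theorem InLinf.sub {F : Type*} [NormedAddCommGroup F] {f g : ℝ → F} (hf : InLinf f)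
    (hg : InLinf g) : InLinf fun t => f t - g t := by
  obtain ⟨C, hC⟩ := hf
  obtain ⟨D, hD⟩ := hg
  exact ⟨C + D, fun t ht => (norm_sub_le _ _).trans (add_le_add (hC t ht) (hD t ht))⟩

theorem inLinf_const {F : Type*} [NormedAddCommGroup F] (c : F) : InLinf fun _ => c :=
  ⟨‖c‖, fun _ _ => le_rfl⟩

theorem inLinf_of_mul_sq_le {F : Type*} [NormedAddCommGroup F] {g : ℝ → F} {c C : ℝ} (hc : 0 < c)
    (h : ∀ t, 0 ≤ t → c * ‖g t‖ ^ 2 ≤ C) : InLinf g :=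
  ⟨√(C / c), fun t ht => by
    simpa only [abs_norm] using Real.abs_le_sqrt ((le_div_iff₀' hc).2 (h t ht))⟩

theorem inLinf_comp_of_locallyBounded {X Y : Type*} [NormedAddCommGroup X] [NormedAddCommGroup Y]
    {g : X → Y → ℝ → ℝ} {x : ℝ → X} {y : ℝ → Y}
    (hg : ∀ R : ℝ, ∃ M : ℝ, ∀ ξ b t, 0 ≤ t → ‖ξ‖ ≤ R → ‖b‖ ≤ R → |g ξ b t| ≤ M)
    (hx : InLinf x) (hy : InLinf y) : InLinf fun t => g (x t) (y t) t := by
  obtain ⟨⟨Cx, hCx⟩, ⟨Cy, hCy⟩⟩ := And.intro hx hy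
  obtain ⟨M, hM⟩ := hg (max Cx Cy)
  exact ⟨M, fun t ht => (hM _ _ t ht ((hCx t ht).trans (le_max_left _ _))
    ((hCy t ht).trans (le_max_right _ _)))⟩

theorem antitoneOn_and_exists_integrableOn_ge_of_dissipation {V V' D : ℝ → ℝ} {a c : ℝ}
    (hc : 0 < c) (hderiv : ∀ t ∈ Ici a, HasDerivAt V (V' t) t) (hV : ∀ t ∈ Ici a, 0 ≤ V t)
    (hD : ∀ t ∈ Ioi a, 0 ≤ D t) (hdiss : ∀ t ∈ Ioi a, c * D t ≤ -V' t) :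
    AntitoneOn V (Ici a) ∧ ∃ w, IntegrableOn w (Ioi a) ∧ ∀ t ∈ Ioi a, D t ≤ w t := by
  have hV' : ∀ t ∈ Ioi a, V' t ≤ 0 := fun t ht =>
    neg_nonneg.1 ((mul_nonneg hc.le (hD t ht)).trans (hdiss t ht))
  exact ⟨antitoneOn_Ici_of_hasDerivAt_nonpos hderiv hV',
    fun t => -V' t / c, (integrableOn_Ioi_deriv_of_nonpos_of_nonneg hderiv hV' hV).neg.div_const c,
    fun t ht => (le_div_iff₀' hc).2 (hdiss t ht)⟩

end Signals

theorem mul_mul_le_add_of_sq_le_four_mul {m c d u v : ℝ} (hc : 0 < c) (h : m ^ 2 ≤ 4 * c * d) :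
    m * (u * v) ≤ c * u ^ 2 + d * v ^ 2 := by
  have key : 0 ≤ 4 * c * (c * u ^ 2 + d * v ^ 2 - m * (u * v)) := by
    nlinarith [sq_nonneg (2 * c * u - m * v), mul_nonneg (sub_nonneg.2 h) (sq_nonneg v)]
  exact sub_nonneg.1 (nonneg_of_mul_nonneg_right key (by positivity))

theorem sq_div_le_mul_of_one_div_mul_abs_le {D I F : ℝ} (h₁ : 0 ≤ I * F)
    (h₂ : 1 / D * |F| ≤ |I|) : F ^ 2 / D ≤ I * F :=
  calc F ^ 2 / D = 1 / D * |F| * |F| := by rw [mul_assoc, abs_mul_abs_self]; ring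
    _ ≤ |I| * |F| := mul_le_mul_of_nonneg_right h₂ (abs_nonneg F)
    _ = I * F := by rw [← abs_mul, abs_of_nonneg h₁]

-- With `1 - k ≤ 2/3`, the Young weights below absorb every cross term and leave the margins
-- on the right.
theorem momentum_cross_terms_le {γ β ρ k D₁ N α F I J P R E Dl Q : ℝ}
    (hγ : 0 < γ) (hβ : 0 < β) (hD₁ : 0 < D₁) (hk : 1 / 3 ≤ k)
    (hρ : 0 ≤ ρ) (hρβ : ρ ≤ β * (1 - k)) (hN : 1 ≤ N) (hα : 2 * γ * D₁ * α ^ 2 ≤ β * (1 - k) * N)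
    (hI : F ^ 2 / D₁ ≤ I * F) (hJ : |J| ≤ E * α) (hP : |P| ≤ E * Dl) (hR : |R| ≤ E * Q) :
    -γ * (I * F) + 5 * γ / 3 * (F * J) - ρ * Dl ^ 2 - 2 * ρ / 3 * P - 2 * (β * N) / 3 * E ^ 2
        - 4 * k * (β * N) / 3 * R - 4 * k ^ 2 * (β * N) / 3 * Q ^ 2
      ≤ -(γ / (50 * D₁)) * F ^ 2 - ρ / 50 * Dl ^ 2 - 13 / 882 * β * E ^ 2
        - 2 / 675 * β * Q ^ 2 := by
  have hFJ : F * J ≤ |F| * (E * α) :=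
    (le_abs_self _).trans (by rw [abs_mul]; exact mul_le_mul_of_nonneg_left hJ (abs_nonneg F))
  have hFαE :
      5 / 3 * (|F| * (E * α)) ≤ 49 / 50 * (F ^ 2 / D₁) + 625 * D₁ / 882 * (E * α) ^ 2 := by
    have := mul_mul_le_add_of_sq_le_four_mul (m := 5 / 3) (u := |F|) (v := E * α)
      (d := 625 * D₁ / 882) (by positivity : (0:ℝ) < 49 / (50 * D₁))
      (le_of_eq (by field_simp; norm_num))
    rw [sq_abs] at this
    linarith [show 49 / (50 * D₁) * F ^ 2 = 49 / 50 * (F ^ 2 / D₁) by ring]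
  have hEDl : 2 / 3 * (E * Dl) ≤ 50 / 441 * E ^ 2 + 49 / 50 * Dl ^ 2 :=
    mul_mul_le_add_of_sq_le_four_mul (by norm_num) (by norm_num)
  have hEQ : 4 * k / 3 * (E * Q) ≤ 50 / 147 * E ^ 2 + 98 * k ^ 2 / 75 * Q ^ 2 :=
    mul_mul_le_add_of_sq_le_four_mul (by norm_num) (le_of_eq (by ring))
  have hk0 : 0 ≤ k := by linarith
  have hβN : 0 ≤ β * N := by positivity
  have hF := mul_le_mul_of_nonneg_left hI hγ.le
  have hFJ' := mul_le_mul_of_nonneg_left hFJ hγ.le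
  have hFαE' := mul_le_mul_of_nonneg_left hFαE hγ.le
  have hαE := mul_le_mul_of_nonneg_right hα (sq_nonneg E)
  have hPDl : ρ * (2 / 3 * -P) ≤ ρ * (50 / 441 * E ^ 2 + 49 / 50 * Dl ^ 2) :=
    mul_le_mul_of_nonneg_left (by linarith [neg_le_abs P]) hρ
  have hρE : ρ * E ^ 2 ≤ β * (1 - k) * N * E ^ 2 :=
    mul_le_mul_of_nonneg_right (hρβ.trans (le_mul_of_one_le_right (hρ.trans hρβ) hN)) (sq_nonneg E)
  have hRQ : β * N * (4 * k / 3 * -R) ≤ β * N * (50 / 147 * E ^ 2 + 98 * k ^ 2 / 75 * Q ^ 2) :=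
    mul_le_mul_of_nonneg_left (hEQ.trans' (mul_le_mul_of_nonneg_left (by linarith [neg_le_abs R])
      (by positivity))) hβN
  have hkE : β * (1 - k) * N * E ^ 2 ≤ 2 / 3 * (β * N * E ^ 2) := by
    nlinarith [mul_nonneg hβN (sq_nonneg E)]
  have hN' : β * E ^ 2 ≤ N * (β * E ^ 2) := le_mul_of_one_le_left (by positivity) hN
  have hNQ : β * Q ^ 2 ≤ N * (β * Q ^ 2) := le_mul_of_one_le_left (by positivity) hN
  have hkQ := mul_le_mul_of_nonneg_right (show 1 / 9 ≤ k ^ 2 by nlinarith)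
    (mul_nonneg hβN (sq_nonneg Q))
  linarith [show γ / (50 * D₁) * F ^ 2 = γ * (F ^ 2 / D₁) / 50 by ring]

section Lyapunov

variable {E : Type*} [NormedAddCommGroup E]

def momentumLyapunov (A k : ℝ) (s : ℝ → ℝ) (a : E) (vhat vbar ahat abar : ℝ → E) (t : ℝ) : ℝ :=
  A / 2 * s t ^ 2 + ‖vhat t - a‖ ^ 2 / 2 + ‖vbar t - a‖ ^ 2 / 2 + ‖ahat t - vhat t‖ ^ 2 / 3
    + k / 3 * ‖ahat t - abar t‖ ^ 2

variable {A k η γ ρ β : ℝ} {s F : ℝ → ℝ} {a : E} {α vhat vbar ahat abar : ℝ → E} {N : ℝ → ℝ} {t : ℝ}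

theorem momentumLyapunov_nonneg (hA : 0 ≤ A) (hk : 0 ≤ k) :
    0 ≤ momentumLyapunov A k s a vhat vbar ahat abar t := by
  unfold momentumLyapunov
  positivity

theorem inLinf_of_momentumLyapunov_le {C : ℝ} (hA : 0 < A) (hk : 0 < k)
    (hV : ∀ t, 0 ≤ t → momentumLyapunov A k s a vhat vbar ahat abar t ≤ C) :
    InLinf s ∧ InLinf vhat ∧ InLinf vbar ∧ InLinf ahat ∧ InLinf abar := by
  have hterms : ∀ t, 0 ≤ t → A / 2 * ‖s t‖ ^ 2 ≤ C ∧ 1 / 2 * ‖vhat t - a‖ ^ 2 ≤ C ∧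
      1 / 2 * ‖vbar t - a‖ ^ 2 ≤ C ∧ 1 / 3 * ‖ahat t - vhat t‖ ^ 2 ≤ C ∧
      k / 3 * ‖ahat t - abar t‖ ^ 2 ≤ C := by
    intro t ht
    have h := hV t ht
    unfold momentumLyapunov at h
    rw [Real.norm_eq_abs, sq_abs]
    have : 0 ≤ A / 2 * s t ^ 2 := by positivity
    have : 0 ≤ k / 3 * ‖ahat t - abar t‖ ^ 2 := by positivity
    refine ⟨?_, ?_, ?_, ?_, ?_⟩ <;> linarith [sq_nonneg ‖vhat t - a‖, sq_nonneg ‖vbar t - a‖,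
      sq_nonneg ‖ahat t - vhat t‖]
  have hvhat : InLinf vhat := by
    simpa using (inLinf_of_mul_sq_le (by norm_num) fun t ht => (hterms t ht).2.1).add
      (inLinf_const a)
  have hahat : InLinf ahat := by
    simpa using (inLinf_of_mul_sq_le (by norm_num) fun t ht => (hterms t ht).2.2.2.1).add hvhat
  refine ⟨inLinf_of_mul_sq_le (by positivity) fun t ht => (hterms t ht).1, hvhat, ?_, hahat, ?_⟩
  · simpa using (inLinf_of_mul_sq_le (by norm_num) fun t ht => (hterms t ht).2.2.1).add
      (inLinf_const a)
  · simpa using hahat.sub (inLinf_of_mul_sq_le (by positivity) fun t ht => (hterms t ht).2.2.2.2)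

variable [InnerProductSpace ℝ E]

theorem hasDerivAt_momentumLyapunov {s' : ℝ} {v w b c : E} (hs : HasDerivAt s s' t)
    (hv : HasDerivAt vhat v t) (hw : HasDerivAt vbar w t) (hb : HasDerivAt ahat b t)
    (hc : HasDerivAt abar c t) :
    HasDerivAt (momentumLyapunov A k s a vhat vbar ahat abar)
      (A * s t * s' + ⟪vhat t - a, v⟫ + ⟪vbar t - a, w⟫ + 2 / 3 * ⟪ahat t - vhat t, b - v⟫
        + 2 * k / 3 * ⟪ahat t - abar t, b - c⟫) t := by
  have := (((((hs.fun_pow 2).const_mul (A / 2)).add ((hv.sub_const a).norm_sq.div_const 2)).add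
    ((hw.sub_const a).norm_sq.div_const 2)).add ((hb.sub hv).norm_sq.div_const 3)).add
    ((hb.sub hc).norm_sq.const_mul (k / 3))
  refine this.congr_deriv ?_
  simp only [Pi.sub_apply]
  push_cast
  ring

theorem momentum_law_inner_eq (a α v w b c : E) (γ F ρ n k : ℝ) :
    ⟪v - a, -((γ * F) • α) + ρ • (w - v)⟫ + ⟪w - a, ρ • (v - w)⟫
      + 2 / 3 * ⟪b - v, n • (v - b) + (k * n) • (c - b) - (-((γ * F) • α) + ρ • (w - v))⟫
      + 2 * k / 3 * ⟪b - c, n • (v - b) + (k * n) • (c - b) - (k * n) • (b - c)⟫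
    = -γ * (⟪b - a, α⟫ * F) + 5 * γ / 3 * (F * ⟪b - v, α⟫) - ρ * ‖w - v‖ ^ 2
      - 2 * ρ / 3 * ⟪b - v, w - v⟫ - 2 * n / 3 * ‖b - v‖ ^ 2 - 4 * k * n / 3 * ⟪b - v, b - c⟫
      - 4 * k ^ 2 * n / 3 * ‖b - c‖ ^ 2 := by
  simp only [← real_inner_self_eq_norm_sq, inner_add_right, inner_sub_left, inner_sub_right,
    inner_neg_right, real_inner_smul_right]
  simp only [real_inner_comm]
  ring

theorem hasDerivAt_momentumLyapunov_of_law (hs : HasDerivAt s (-η * s t + F t) t)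
    (hv : HasDerivAt vhat (-((γ * F t) • α t) + ρ • (vbar t - vhat t)) t)
    (hvb : HasDerivAt vbar (ρ • (vhat t - vbar t)) t)
    (ha : HasDerivAt ahat ((β * N t) • (vhat t - ahat t) + (k * (β * N t)) • (abar t - ahat t)) t)
    (hab : HasDerivAt abar ((k * (β * N t)) • (ahat t - abar t)) t) :
    HasDerivAt (momentumLyapunov A k s a vhat vbar ahat abar)
      (-(A * η) * s t ^ 2 + A * (s t * F t) - γ * (⟪ahat t - a, α t⟫ * F t)
        + 5 * γ / 3 * (F t * ⟪ahat t - vhat t, α t⟫) - ρ * ‖vbar t - vhat t‖ ^ 2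
        - 2 * ρ / 3 * ⟪ahat t - vhat t, vbar t - vhat t⟫ - 2 * (β * N t) / 3 * ‖ahat t - vhat t‖ ^ 2
        - 4 * k * (β * N t) / 3 * ⟪ahat t - vhat t, ahat t - abar t⟫
        - 4 * k ^ 2 * (β * N t) / 3 * ‖ahat t - abar t‖ ^ 2) t := by
  refine (hasDerivAt_momentumLyapunov hs hv hvb ha hab).congr_deriv ?_
  linear_combination momentum_law_inner_eq a (α t) (vhat t) (vbar t) (ahat t) (abar t) γ (F t) ρ
    (β * N t) k

theorem exists_momentumLyapunov_dissipation {μ D₁ : ℝ} (hη : 0 < η) (hγ : 0 < γ) (hβ : 0 < β)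
    (hD₁ : 0 < D₁) (hk : 1 / 3 ≤ k) (hρ : 0 < ρ) (hρβ : ρ ≤ β * (1 - k))
    (hμ : 2 * γ * D₁ ≤ μ * (β * (1 - k)))
    (hmono₁ : ∀ t, 0 ≤ t → 0 ≤ ⟪ahat t - a, α t⟫ * F t)
    (hmono₂ : ∀ t, 0 ≤ t → 1 / D₁ * |F t| ≤ |⟪α t, ahat t - a⟫|)
    (hs : ∀ t, 0 ≤ t → HasDerivAt s (-η * s t + F t) t)
    (hv : ∀ t, 0 ≤ t → HasDerivAt vhat (-((γ * F t) • α t) + ρ • (vbar t - vhat t)) t)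
    (hvb : ∀ t, 0 ≤ t → HasDerivAt vbar (ρ • (vhat t - vbar t)) t)
    (ha : ∀ t, 0 ≤ t → HasDerivAt ahat ((β * (1 + μ * ‖α t‖ ^ 2)) • (vhat t - ahat t)
      + (k * (β * (1 + μ * ‖α t‖ ^ 2))) • (abar t - ahat t)) t)
    (hab : ∀ t, 0 ≤ t →
      HasDerivAt abar ((k * (β * (1 + μ * ‖α t‖ ^ 2))) • (ahat t - abar t)) t) :
    ∃ c > 0, (∀ t, 0 ≤ t →
      HasDerivAt (momentumLyapunov (γ * η / (50 * D₁)) k s a vhat vbar ahat abar)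
        (deriv (momentumLyapunov (γ * η / (50 * D₁)) k s a vhat vbar ahat abar) t) t) ∧
      ∀ t, 0 ≤ t → c * (s t ^ 2 + F t ^ 2 + ‖vhat t - vbar t‖ ^ 2 + ‖ahat t - abar t‖ ^ 2
          + ‖vhat t - ahat t‖ ^ 2)
        ≤ -deriv (momentumLyapunov (γ * η / (50 * D₁)) k s a vhat vbar ahat abar) t := by
  have hβk : 0 < β * (1 - k) := hρ.trans_le hρβ
  have hμ0 : 0 ≤ μ := by nlinarith [mul_pos (mul_pos (mul_pos two_pos hγ) hD₁) hβk]
  set c := min (min (γ * η ^ 2 / (100 * D₁)) (γ / (100 * D₁))) (min (ρ / 50) (2 / 675 * β))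
  have hV t (ht : 0 ≤ t) := hasDerivAt_momentumLyapunov_of_law (A := γ * η / (50 * D₁)) (a := a)
    (N := fun t => 1 + μ * ‖α t‖ ^ 2) (hs t ht) (hv t ht) (hvb t ht) (ha t ht) (hab t ht)
  refine ⟨c, by positivity, fun t ht => (hV t ht).deriv.symm ▸ hV t ht, fun t ht => ?_⟩
  rw [(hV t ht).deriv]
  have hN : 1 ≤ 1 + μ * ‖α t‖ ^ 2 := le_add_of_nonneg_right (by positivity)
  have hα : 2 * γ * D₁ * ‖α t‖ ^ 2 ≤ β * (1 - k) * (1 + μ * ‖α t‖ ^ 2) := by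
    nlinarith [mul_le_mul_of_nonneg_right hμ (sq_nonneg ‖α t‖)]
  have hcross := momentum_cross_terms_le hγ hβ hD₁ hk hρ.le hρβ hN hα
    (sq_div_le_mul_of_one_div_mul_abs_le (hmono₁ t ht) (real_inner_comm (α t) _ ▸ hmono₂ t ht))
    (abs_real_inner_le_norm (ahat t - vhat t) (α t))
    (abs_real_inner_le_norm (ahat t - vhat t) (vbar t - vhat t))
    (abs_real_inner_le_norm (ahat t - vhat t) (ahat t - abar t))
  -- `A = γη/(50 D₁)` makes Young's inequality on `A s f̃` cost half of the `f̃²` margin.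
  have hSF : γ * η / (50 * D₁) * (s t * F t)
      ≤ γ * η / (50 * D₁) * η / 2 * s t ^ 2 + γ / (100 * D₁) * F t ^ 2 :=
    mul_mul_le_add_of_sq_le_four_mul (by positivity) (le_of_eq (by field_simp; ring))
  rw [norm_sub_rev (vbar t), norm_sub_rev (ahat t) (vhat t)] at hcross ⊢
  have h₁ : c * s t ^ 2 ≤ γ * η ^ 2 / (100 * D₁) * s t ^ 2 :=
    mul_le_mul_of_nonneg_right ((min_le_left _ _).trans (min_le_left _ _)) (sq_nonneg _)
  have h₂ : c * F t ^ 2 ≤ γ / (100 * D₁) * F t ^ 2 :=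
    mul_le_mul_of_nonneg_right ((min_le_left _ _).trans (min_le_right _ _)) (sq_nonneg _)
  have h₃ : c * ‖vhat t - vbar t‖ ^ 2 ≤ ρ / 50 * ‖vhat t - vbar t‖ ^ 2 :=
    mul_le_mul_of_nonneg_right ((min_le_right _ _).trans (min_le_left _ _)) (sq_nonneg _)
  have h₄ : c * (‖ahat t - abar t‖ ^ 2 + ‖vhat t - ahat t‖ ^ 2)
      ≤ 2 / 675 * β * (‖ahat t - abar t‖ ^ 2 + ‖vhat t - ahat t‖ ^ 2) :=
    mul_le_mul_of_nonneg_right ((min_le_right _ _).trans (min_le_right _ _)) (by positivity)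
  linarith [mul_nonneg hβ.le (sq_nonneg ‖vhat t - ahat t‖),
    show γ / (50 * D₁) * F t ^ 2 = 2 * (γ / (100 * D₁) * F t ^ 2) by ring,
    show γ * η / (50 * D₁) * η / 2 * s t ^ 2 = γ * η ^ 2 / (100 * D₁) * s t ^ 2 by ring,
    show γ * η / (50 * D₁) * η * s t ^ 2 = 2 * (γ * η ^ 2 / (100 * D₁) * s t ^ 2) by ring]

end Lyapunov

/-- doubly elastic momentum adaptation law for nonlinearly
parameterized dynamics under the monotonicity assumption. -/
theorem doubly_elastic_momentum_adaptation_nonlinear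
    {n p : ℕ}
    (x xd : ℝ → EuclideanSpace ℝ (Fin n))
    (s : ℝ → ℝ)
    (f : EuclideanSpace ℝ (Fin n) → EuclideanSpace ℝ (Fin p) → ℝ → ℝ)
    (α : EuclideanSpace ℝ (Fin n) → ℝ → EuclideanSpace ℝ (Fin p))
    (a : EuclideanSpace ℝ (Fin p))
    (ahat vhat vbar abar : ℝ → EuclideanSpace ℝ (Fin p))
    (η γ β μ ρ k D₁ : ℝ)
    (hη : 0 < η) (hγ : 0 < γ) (hβ : 0 < β) (hD₁ : 0 < D₁)
    (hk₁ : 1 / 3 ≤ k) (hk₂ : k < 1)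
    (hρ₁ : 0 < ρ) (hρ₂ : ρ < β * (1 - k))
    (hμ : 2 * γ * D₁ / (β * (1 - k)) < μ)
    -- monotonicity assumption
    (hmono₁ : ∀ (b : EuclideanSpace ℝ (Fin p)) (ξ : EuclideanSpace ℝ (Fin n)) (t : ℝ),
      0 ≤ t → 0 ≤ ⟪b - a, α ξ t⟫ * (f ξ b t - f ξ a t))
    (hmono₂ : ∀ (b : EuclideanSpace ℝ (Fin p)) (ξ : EuclideanSpace ℝ (Fin n)) (t : ℝ),
      0 ≤ t → (1 / D₁) * |f ξ b t - f ξ a t| ≤ |⟪α ξ t, b - a⟫|)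
    -- error dynamics ṡ = -η s + f̃
    (hs : ∀ t, 0 ≤ t →
      HasDerivAt s (-η * s t + (f (x t) (ahat t) t - f (x t) a t)) t)
    -- doubly elastic momentum adaptation law, 𝒩(t) = 1 + μ‖α(x(t), t)‖²
    (hv : ∀ t, 0 ≤ t →
      HasDerivAt vhat
        (-((γ * (f (x t) (ahat t) t - f (x t) a t)) • α (x t) t) +
          ρ • (vbar t - vhat t)) t)
    (hvb : ∀ t, 0 ≤ t → HasDerivAt vbar (ρ • (vhat t - vbar t)) t)
    (ha : ∀ t, 0 ≤ t →
      HasDerivAt ahat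
        ((β * (1 + μ * ‖α (x t) t‖ ^ 2)) • (vhat t - ahat t) +
          (k * (β * (1 + μ * ‖α (x t) t‖ ^ 2))) • (abar t - ahat t)) t)
    (hab : ∀ t, 0 ≤ t →
      HasDerivAt abar
        ((k * (β * (1 + μ * ‖α (x t) t‖ ^ 2))) • (ahat t - abar t)) t)
    -- f̃ is locally bounded in (x, â) uniformly in t
    (hfloc : ∀ R : ℝ, ∃ M : ℝ,
      ∀ (ξ : EuclideanSpace ℝ (Fin n)) (b : EuclideanSpace ℝ (Fin p)) (t : ℝ),
        0 ≤ t → ‖ξ‖ ≤ R → ‖b‖ ≤ R → |f ξ b t - f ξ a t| ≤ M)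
    -- boundedness of s implies boundedness of x
    (hsx : InLinf s → InLinf x)
    -- s → 0 implies x → x_d
    (hxd : Tendsto s atTop (nhds 0) →
      Tendsto (fun t => x t - xd t) atTop (nhds 0)) :
    InLinf x ∧ InLinf vhat ∧ InLinf vbar ∧ InLinf ahat ∧ InLinf abar ∧
    (InL2 (fun t => f (x t) (ahat t) t - f (x t) a t) ∧
      InLinf (fun t => f (x t) (ahat t) t - f (x t) a t)) ∧
    (InL2 s ∧ InLinf s) ∧
    InL2 (fun t => vhat t - vbar t) ∧
    InL2 (fun t => ahat t - abar t) ∧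
    InL2 (fun t => vhat t - ahat t) ∧
    Tendsto s atTop (nhds 0) ∧
    Tendsto (fun t => x t - xd t) atTop (nhds 0) := by
  set F := fun t => f (x t) (ahat t) t - f (x t) a t
  set V := momentumLyapunov (γ * η / (50 * D₁)) k s a vhat vbar ahat abar
  have hβk : 0 < β * (1 - k) := mul_pos hβ (by linarith)
  obtain ⟨c, hc, hV, hdiss⟩ := exists_momentumLyapunov_dissipation (F := F)
    (α := fun t => α (x t) t) hη hγ hβ hD₁ hk₁ hρ₁ hρ₂.le
    (by rw [div_lt_iff₀ hβk] at hμ; linarith) (fun t => hmono₁ _ _ t) (fun t => hmono₂ _ _ t)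
    hs hv hvb ha hab
  obtain ⟨hanti, w, hw, hDw⟩ := antitoneOn_and_exists_integrableOn_ge_of_dissipation hc hV
    (fun t _ => momentumLyapunov_nonneg (by positivity) (by linarith)) (fun t _ => by positivity)
    fun t ht => hdiss t (le_of_lt ht)
  obtain ⟨hs_bdd, hv_bdd, hvb_bdd, ha_bdd, hab_bdd⟩ := inLinf_of_momentumLyapunov_le
    (by positivity) (by linarith) fun t ht => hanti Set.self_mem_Ici ht ht
  have hx_bdd := hsx hs_bdd
  have hsq : ∀ t ∈ Set.Ioi 0, s t ^ 2 ≤ w t ∧ F t ^ 2 ≤ w t ∧ ‖vhat t - vbar t‖ ^ 2 ≤ w t ∧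
      ‖ahat t - abar t‖ ^ 2 ≤ w t ∧ ‖vhat t - ahat t‖ ^ 2 ≤ w t := fun t ht => by
    have := hDw t ht
    refine ⟨?_, ?_, ?_, ?_, ?_⟩ <;> linarith [sq_nonneg (s t), sq_nonneg (F t),
      sq_nonneg ‖vhat t - vbar t‖, sq_nonneg ‖ahat t - abar t‖, sq_nonneg ‖vhat t - ahat t‖]
  have hlim : Tendsto s atTop (nhds 0) :=
    tendsto_zero_of_sq_le_of_deriv_sq_le (fun t ht => hs t (le_of_lt ht)) hw
      (hw.const_mul (2 * η ^ 2 + 2)) (fun t ht => (hsq t ht).1) fun t ht => by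
        nlinarith [hsq t ht, sq_nonneg (η * s t + F t)]
  refine ⟨hx_bdd, hv_bdd, hvb_bdd, ha_bdd, hab_bdd,
    ⟨inL2_of_sq_le hw fun t ht => ?_, inLinf_comp_of_locallyBounded hfloc hx_bdd ha_bdd⟩,
    ⟨inL2_of_sq_le hw fun t ht => ?_, hs_bdd⟩, inL2_of_sq_le hw fun t ht => (hsq t ht).2.2.1,
    inL2_of_sq_le hw fun t ht => (hsq t ht).2.2.2.1,
    inL2_of_sq_le hw fun t ht => (hsq t ht).2.2.2.2, hlim, hxd hlim⟩
  · rw [Real.norm_eq_abs, sq_abs]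
    exact (hsq t ht).2.1
  · rw [Real.norm_eq_abs, sq_abs]
    exact (hsq t ht).1

end
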